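/- Let s ∈ (1/2, 1]. Then for every t ∈ ℝ, |t·F_s'(t)| ≤ 5·F_s(t). -/

import Mathlib

/-!
`F_s` is even, so `t ↦ t F_s'(t)` is even too and it suffices to take `t > 0`. For `t > 1`,
`F_s t = t^s` and `t F_s'(t) = s F_s(t)`. On `(0, 1]`, `F_s t = (3/8) t^(s+1/2) p(t)` with
`p(t) = t² - 10/3 t + 5 > 0`, so `t F_s'(t) = (3/8) t^(s+1/2) ((s + 1/2) p(t) + t p'(t))` and the
claim becomes a polynomial inequality on `[0, 1]`. At `t = 1` both pieces have value `1` and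
slope `s`, so `F_s` is differentiable there.
-/

noncomputable def theta (t : ℝ) : ℝ :=
  if |t| ≤ 1 then (3 / 8) * |t| ^ ((1 : ℝ) / 2) * (|t| ^ 2 - (10 / 3) * |t| + 5) else 1

noncomputable def Fs (s t : ℝ) : ℝ := theta t * |t| ^ s

open Set Filter

theorem hasDerivAt_of_hasDerivWithinAt_Iic_Ici {F : Type*} [NormedAddCommGroup F]
    [NormedSpace ℝ F] {f : ℝ → F} {f' : F} {a : ℝ}
    (hl : HasDerivWithinAt f f' (Iic a) a) (hr : HasDerivWithinAt f f' (Ici a) a) :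
    HasDerivAt f f' a := by
  simpa [Iic_union_Ici] using hl.union hr

theorem Fs_neg (s t : ℝ) : Fs s (-t) = Fs s t := by
  simp only [Fs, theta, abs_neg]

theorem deriv_Fs_neg (s t : ℝ) : deriv (Fs s) (-t) = -deriv (Fs s) t := by
  calc deriv (Fs s) (-t) = deriv (fun x => Fs s (-x)) (-t) := by simp only [Fs_neg]
    _ = -deriv (Fs s) t := by rw [deriv_comp_neg, neg_neg]

theorem Fs_zero (s : ℝ) : Fs s 0 = 0 := by
  simp [Fs, theta]

theorem Fs_of_pos_of_le_one (s : ℝ) {x : ℝ} (hx : 0 < x) (hx1 : x ≤ 1) :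
    Fs s x = 3 / 8 * x ^ (s + 1 / 2) * (x ^ 2 - 10 / 3 * x + 5) := by
  rw [Fs, theta, abs_of_pos hx, if_pos hx1, Real.rpow_add hx]
  ring

theorem Fs_of_one_le (s : ℝ) {x : ℝ} (hx : 1 ≤ x) : Fs s x = x ^ s := by
  rcases hx.eq_or_lt with rfl | hx
  · norm_num [Fs, theta]
  · rw [Fs, theta, abs_of_pos (one_pos.trans hx), if_neg hx.not_ge, one_mul]

theorem hasDerivAt_rpow_mul_poly (s : ℝ) {x : ℝ} (hx : 0 < x) :
    HasDerivAt (fun y => 3 / 8 * y ^ (s + 1 / 2) * (y ^ 2 - 10 / 3 * y + 5))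
      (3 / 8 * x ^ (s - 1 / 2) * ((s + 1 / 2) * (x ^ 2 - 10 / 3 * x + 5) + x * (2 * x - 10 / 3)))
      x := by
  have hpow : HasDerivAt (fun y => y ^ (s + 1 / 2)) ((s + 1 / 2) * x ^ (s - 1 / 2)) x := by
    have h := Real.hasDerivAt_rpow_const (p := s + 1 / 2) (Or.inl hx.ne')
    rwa [show s + 1 / 2 - 1 = s - 1 / 2 by ring] at h
  have hpoly : HasDerivAt (fun y => y ^ 2 - 10 / 3 * y + 5) (2 * x - 10 / 3) x := by
    simpa using (((hasDerivAt_pow 2 x).sub ((hasDerivAt_id x).const_mul (10 / 3))).add_const 5)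
  refine ((hpow.const_mul (3 / 8)).mul hpoly).congr_deriv ?_
  have hsplit : x ^ (s + 1 / 2) = x ^ (s - 1 / 2) * x := by
    rw [← Real.rpow_add_one hx.ne']; ring_nf
  rw [hsplit]; ring

theorem hasDerivAt_Fs_of_pos_of_le_one (s : ℝ) {t : ℝ} (ht : 0 < t) (ht1 : t ≤ 1) :
    HasDerivAt (Fs s)
      (3 / 8 * t ^ (s - 1 / 2) * ((s + 1 / 2) * (t ^ 2 - 10 / 3 * t + 5) + t * (2 * t - 10 / 3)))
      t := by
  have hinner := hasDerivAt_rpow_mul_poly s ht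
  rcases ht1.lt_or_eq with ht1 | rfl
  · exact hinner.congr_of_eventuallyEq <| eventuallyEq_of_mem (Ioo_mem_nhds ht ht1)
      fun x hx => Fs_of_pos_of_le_one s hx.1 hx.2.le
  refine hasDerivAt_of_hasDerivWithinAt_Iic_Ici ?_ ?_
  · refine hinner.hasDerivWithinAt.congr_of_eventuallyEq ?_ (Fs_of_pos_of_le_one s one_pos le_rfl)
    filter_upwards [inter_mem_nhdsWithin (Iic 1) (Ioi_mem_nhds one_pos)] with x hx
    exact Fs_of_pos_of_le_one s hx.2 hx.1
  · have hslope : 3 / 8 * (1 : ℝ) ^ (s - 1 / 2) * ((s + 1 / 2) * (1 ^ 2 - 10 / 3 * 1 + 5)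
        + 1 * (2 * 1 - 10 / 3)) = s * 1 ^ (s - 1) := by
      rw [Real.one_rpow, Real.one_rpow]; ring
    rw [hslope]
    refine (Real.hasDerivAt_rpow_const (Or.inl one_ne_zero)).hasDerivWithinAt.congr_of_eventuallyEq
      ?_ (Fs_of_one_le s le_rfl)
    filter_upwards [self_mem_nhdsWithin] with x hx
    exact Fs_of_one_le s hx

theorem hasDerivAt_Fs_of_one_lt (s : ℝ) {t : ℝ} (ht : 1 < t) :
    HasDerivAt (Fs s) (s * t ^ (s - 1)) t :=
  (Real.hasDerivAt_rpow_const (Or.inl (one_pos.trans ht).ne')).congr_of_eventuallyEq <|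
    eventuallyEq_of_mem (Ioi_mem_nhds ht) fun _ hx => Fs_of_one_le s hx.le

theorem abs_euler_poly_le {s t : ℝ} (hs0 : 0 ≤ s) (hs1 : s ≤ 1) (ht0 : 0 ≤ t) (ht1 : t ≤ 1) :
    |(s + 1 / 2) * (t ^ 2 - 10 / 3 * t + 5) + t * (2 * t - 10 / 3)|
      ≤ 5 * (t ^ 2 - 10 / 3 * t + 5) := by
  rw [abs_le]
  constructor <;> nlinarith [mul_nonneg hs0 ht0, mul_nonneg (sub_nonneg.2 hs1) ht0,
    mul_nonneg ht0 (sub_nonneg.2 ht1)]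

theorem abs_mul_deriv_Fs_le_of_pos_of_le_one {s t : ℝ} (hs0 : 0 ≤ s) (hs1 : s ≤ 1)
    (ht : 0 < t) (ht1 : t ≤ 1) : |t * deriv (Fs s) t| ≤ 5 * Fs s t := by
  have hmul : t * t ^ (s - 1 / 2) = t ^ (s + 1 / 2) := by
    rw [mul_comm, ← Real.rpow_add_one ht.ne']; ring_nf
  have hpos : 0 < 3 / 8 * t ^ (s + 1 / 2) := by positivity
  calc |t * deriv (Fs s) t|
      = 3 / 8 * t ^ (s + 1 / 2)
          * |(s + 1 / 2) * (t ^ 2 - 10 / 3 * t + 5) + t * (2 * t - 10 / 3)| := by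
        rw [(hasDerivAt_Fs_of_pos_of_le_one s ht ht1).deriv, ← abs_of_pos hpos, ← abs_mul, ← hmul]
        ring_nf
    _ ≤ 3 / 8 * t ^ (s + 1 / 2) * (5 * (t ^ 2 - 10 / 3 * t + 5)) :=
        mul_le_mul_of_nonneg_left (abs_euler_poly_le hs0 hs1 ht.le ht1) hpos.le
    _ = 5 * Fs s t := by rw [Fs_of_pos_of_le_one s ht ht1]; ring

theorem abs_mul_deriv_Fs_le_of_one_lt {s t : ℝ} (hs0 : 0 ≤ s) (hs1 : s ≤ 1) (ht : 1 < t) :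
    |t * deriv (Fs s) t| ≤ 5 * Fs s t := by
  have ht0 : 0 < t := one_pos.trans ht
  have hmul : t * (s * t ^ (s - 1)) = s * t ^ s := by
    rw [mul_left_comm, mul_comm t, ← Real.rpow_add_one ht0.ne', sub_add_cancel]
  rw [(hasDerivAt_Fs_of_one_lt s ht).deriv, Fs_of_one_le s ht.le, hmul,
    abs_of_nonneg (by positivity)]
  exact mul_le_mul_of_nonneg_right (by linarith) (by positivity)

/-- For `s ∈ (1/2, 1]`: `|t · F_s'(t)| ≤ 5 · F_s(t)` for every `t ∈ ℝ`. -/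
theorem stmt_15 (s : ℝ) (hs1 : 1 / 2 < s) (hs2 : s ≤ 1) :
    ∀ t : ℝ, |t * deriv (Fs s) t| ≤ 5 * Fs s t := by
  intro t
  wlog ht : 0 ≤ t generalizing t
  · simpa [Fs_neg, deriv_Fs_neg] using this (-t) (by linarith)
  rcases ht.eq_or_lt with rfl | ht
  · simp [Fs_zero]
  rcases le_or_gt t 1 with ht1 | ht1
  · exact abs_mul_deriv_Fs_le_of_pos_of_le_one (by linarith) hs2 ht ht1
  · exact abs_mul_deriv_Fs_le_of_one_lt (by linarith) hs2 ht1
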